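/- Under the coupled-dynamics setup, let R > 0 satisfy R ≤ (4/27)(1 − ‖A'_{t₀}‖)/(‖H‖³ b_max²) − α. Then for every Δt ∈ ℕ with 0 ≤ Δt ≤ R/α, the maximum deviation in b satisfies ε_b(Δt) ≤ α b_max Δt / (3R − α Δt). -/

import Mathlib

open Matrix Finset

/-- The spectral norm (ℓ²-operator norm) of a real square matrix. -/
noncomputable def specNorm {n : ℕ} (A : Matrix (Fin n) (Fin n) ℝ) : ℝ :=
  ‖Matrix.toEuclideanCLM (𝕜 := ℝ) A‖

/-- The Euclidean norm of a real vector. -/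
noncomputable def evNorm {n : ℕ} (v : Fin n → ℝ) : ℝ :=
  Real.sqrt (∑ i, v i ^ 2)

/-- `ε_A(Δt) = max_{t₀ ≤ τ ≤ t₀+Δt} ‖A_τ − A'_{t₀}‖` (spectral norm). -/
noncomputable def epsA {n : ℕ} (t₀ : ℕ)
    (A A' : ℕ → Matrix (Fin n) (Fin n) ℝ) (Δt : ℕ) : ℝ :=
  (Finset.Icc t₀ (t₀ + Δt)).sup'
    (Finset.nonempty_Icc.mpr (Nat.le_add_right _ _))
    (fun τ => specNorm (A τ - A' t₀))

/-- `ε_b(Δt) = max_{t₀ ≤ τ ≤ t₀+Δt} ‖b_τ − b'_τ‖` (Euclidean norm). -/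
noncomputable def epsB {n : ℕ} (t₀ : ℕ)
    (b b' : ℕ → (Fin n → ℝ)) (Δt : ℕ) : ℝ :=
  (Finset.Icc t₀ (t₀ + Δt)).sup'
    (Finset.nonempty_Icc.mpr (Nat.le_add_right _ _))
    (fun τ => evNorm (b τ - b' τ))

/-
While `α Δt ≤ R`, the deviation `e_k = ‖b_{t₀+k} - b'_{t₀+k}‖` obeys
`e_{k+1} ≤ ‖A'_{t₀}‖ e_k + ‖A_{t₀+k} - A'_{t₀}‖ ‖b_{t₀+k}‖`, and the drift of `A` is at most
`α ‖H‖³ Σ_{j<k} ‖b_{j+1}‖ ‖b_j‖`, each step being a rank-one update. One shows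
`e_k ≤ f_k := α b_max k / (3R - α k)` by strong induction: then `‖b_j‖ ≤ f_j + b_max`, and these
bounds `g_j = 3 R b_max / (3R - α j)` satisfy `g_{j+1} g_j = (3 R b_max / α)(g_{j+1} - g_j)`, so the
drift is at most `3 ‖H‖³ R b_max f_k`. Since `g_k ≤ 3 b_max / 2` and the hypothesis on `R`
gives `(9/2) ‖H‖³ b_max² R ≤ 1 - ‖A'_{t₀}‖`, the drift term is at most `(1 - ‖A'_{t₀}‖) f_k`, whence
`e_{k+1} ≤ f_k ≤ f_{k+1}`.
-/

open scoped Matrix.Norms.L2Operator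

lemma mul_le_of_pos_le_div {a b c : ℝ} (ha : 0 < a) (hc : 0 ≤ c) (h : a ≤ b / c) : a * c ≤ b := by
  rcases hc.eq_or_lt with rfl | hc
  · simp only [div_zero] at h; linarith
  · exact (le_div_iff₀ hc).mp h

section Norms

variable {n : ℕ}

lemma specNorm_eq_norm (A : Matrix (Fin n) (Fin n) ℝ) : specNorm A = ‖A‖ := rfl

lemma evNorm_eq_norm (v : Fin n → ℝ) : evNorm v = ‖WithLp.toLp 2 v‖ := by
  simp [evNorm, EuclideanSpace.norm_eq]

lemma evNorm_nonneg (v : Fin n → ℝ) : 0 ≤ evNorm v := by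
  rw [evNorm_eq_norm]; exact norm_nonneg _

lemma evNorm_add_le (u v : Fin n → ℝ) : evNorm (u + v) ≤ evNorm u + evNorm v := by
  simp only [evNorm_eq_norm, WithLp.toLp_add]; exact norm_add_le _ _

lemma evNorm_le_evNorm_sub_add (u v : Fin n → ℝ) : evNorm u ≤ evNorm (u - v) + evNorm v := by
  simpa using evNorm_add_le (u - v) v

lemma evNorm_mulVec_le (A : Matrix (Fin n) (Fin n) ℝ) (v : Fin n → ℝ) :
    evNorm (A *ᵥ v) ≤ ‖A‖ * evNorm v := by
  simp only [evNorm_eq_norm, ← toEuclideanCLM_toLp, cstar_norm_def]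
  exact ContinuousLinearMap.le_opNorm _ _

lemma norm_vecMulVec (u v : Fin n → ℝ) : ‖vecMulVec u v‖ = evNorm u * evNorm v := by
  have : toEuclideanCLM (𝕜 := ℝ) (vecMulVec u v) =
      InnerProductSpace.rankOne ℝ (WithLp.toLp 2 u) (WithLp.toLp 2 v) := by
    ext x i
    simp [vecMulVec, mulVec, dotProduct, PiLp.inner_apply, Finset.mul_sum, mul_comm, mul_assoc]
  rw [cstar_norm_def, this, InnerProductSpace.norm_rankOne, evNorm_eq_norm, evNorm_eq_norm]

lemma norm_mul_vecMulVec_mul_le (H G : Matrix (Fin n) (Fin n) ℝ) (u v : Fin n → ℝ) :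
    ‖H * vecMulVec u v * G‖ ≤ ‖H‖ * (evNorm u * evNorm v) * ‖G‖ := by
  grw [norm_mul_le, norm_mul_le, norm_vecMulVec]

lemma evNorm_mulVec_sub_mulVec_le (A A₀ : Matrix (Fin n) (Fin n) ℝ) (x y s : Fin n → ℝ) :
    evNorm ((A *ᵥ x - s) - (A₀ *ᵥ y - s)) ≤ ‖A₀‖ * evNorm (x - y) + ‖A - A₀‖ * evNorm x := by
  have hsplit : (A *ᵥ x - s) - (A₀ *ᵥ y - s) = A₀ *ᵥ (x - y) + (A - A₀) *ᵥ x := by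
    rw [mulVec_sub, sub_mulVec]; abel
  rw [hsplit]
  exact (evNorm_add_le _ _).trans (add_le_add (evNorm_mulVec_le _ _) (evNorm_mulVec_le _ _))

end Norms

lemma norm_sub_le_sum_of_rankOne_update {n t₀ : ℕ} {α : ℝ} {H : Matrix (Fin n) (Fin n) ℝ}
    {A : ℕ → Matrix (Fin n) (Fin n) ℝ} {b : ℕ → Fin n → ℝ}
    (hArec : ∀ t, t₀ ≤ t →
      A (t + 1) = A t - α • (H * vecMulVec (b (t + 1)) (b t) * H ^ 2)) (k : ℕ) :
    ‖A (t₀ + k) - A t₀‖ ≤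
      |α| * ‖H‖ ^ 3 * ∑ j ∈ range k, evNorm (b (t₀ + j + 1)) * evNorm (b (t₀ + j)) := by
  rw [← dist_eq_norm, dist_comm, mul_sum]
  refine dist_le_range_sum_of_dist_le (f := fun j => A (t₀ + j)) k fun {j} _ => ?_
  rw [dist_eq_norm, ← add_assoc, hArec _ (Nat.le_add_right t₀ j), sub_sub_cancel, norm_smul,
    Real.norm_eq_abs]
  calc |α| * ‖H * vecMulVec (b (t₀ + j + 1)) (b (t₀ + j)) * H ^ 2‖
      ≤ |α| * (‖H‖ * (evNorm (b (t₀ + j + 1)) * evNorm (b (t₀ + j))) * ‖H‖ ^ 2) := by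
        grw [norm_mul_vecMulVec_mul_le, norm_pow_le' H two_pos]
        exact mul_nonneg (norm_nonneg _) (mul_nonneg (evNorm_nonneg _) (evNorm_nonneg _))
    _ = |α| * ‖H‖ ^ 3 * (evNorm (b (t₀ + j + 1)) * evNorm (b (t₀ + j))) := by ring

noncomputable def deviationBound (α b R : ℝ) (k : ℕ) : ℝ := α * b * k / (3 * R - α * k)

section DeviationBound

variable {α b R : ℝ}

@[simp]
lemma deviationBound_zero : deviationBound α b R 0 = 0 := by
  simp [deviationBound]

lemma deviationBound_add_eq {k : ℕ} (hk : α * k < 3 * R) :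
    deviationBound α b R k + b = 3 * R * b / (3 * R - α * k) := by
  rw [deviationBound, div_add' _ _ _ (sub_pos.mpr hk).ne']
  ring

lemma deviationBound_nonneg (hα : 0 ≤ α) (hb : 0 ≤ b) {k : ℕ} (hk : α * k < 3 * R) :
    0 ≤ deviationBound α b R k :=
  div_nonneg (by positivity) (sub_pos.mpr hk).le

lemma deviationBound_mono (hα : 0 ≤ α) (hb : 0 ≤ b) (hR : 0 ≤ R) {j k : ℕ} (hjk : j ≤ k)
    (hk : α * k < 3 * R) : deviationBound α b R j ≤ deviationBound α b R k := by
  have hjk' : (j : ℝ) ≤ k := by exact_mod_cast hjk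
  have hj : α * j < 3 * R := (mul_le_mul_of_nonneg_left hjk' hα).trans_lt hk
  rw [deviationBound, deviationBound, div_le_div_iff₀ (sub_pos.mpr hj) (sub_pos.mpr hk)]
  have : 0 ≤ α * b * (3 * R) * (k - j) := by
    have := sub_nonneg.mpr hjk'; positivity
  nlinarith

lemma deviationBound_add_le (hb : 0 ≤ b) (hR : 0 < R) {k : ℕ} (hk : α * k ≤ R) :
    deviationBound α b R k + b ≤ 3 / 2 * b := by
  rw [deviationBound_add_eq (by linarith), div_le_iff₀ (by linarith)]
  nlinarith

lemma sum_range_deviationBound_add_mul (hα : 0 < α) {k : ℕ} (hk : α * k < 3 * R) :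
    ∑ j ∈ range k, (deviationBound α b R (j + 1) + b) * (deviationBound α b R j + b) =
      3 * R * b / α * deviationBound α b R k := by
  induction k with
  | zero => simp
  | succ k ih =>
    push_cast at hk
    have hk' : α * k < 3 * R := by linarith
    rw [sum_range_succ, ih hk', deviationBound_add_eq (by push_cast; linarith),
      deviationBound_add_eq hk']
    have h₁ : 3 * R - α * (k + 1) ≠ 0 := by linarith
    have h₂ : 3 * R - α * k ≠ 0 := by linarith
    simp only [deviationBound]
    push_cast
    field_simp
    ring

theorem le_deviationBound_of_recurrence {e β : ℕ → ℝ} {L γ : ℝ} (hα : 0 < α) (hb : 0 ≤ b) (hR : 0 < R)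
    (hL : 0 ≤ L) (hγ : 0 ≤ γ) (hsmall : 9 * γ * b ^ 2 * R ≤ 2 * (1 - L)) (he₀ : e 0 = 0)
    (hβ₀ : ∀ k, 0 ≤ β k) (hβ : ∀ k, β k ≤ e k + b)
    (hstep : ∀ k, e (k + 1) ≤ L * e k + α * γ * (∑ j ∈ range k, β (j + 1) * β j) * β k) :
    ∀ k : ℕ, α * k ≤ R → e k ≤ deviationBound α b R k := by
  intro k
  induction k using Nat.strong_induction_on with
  | _ k ih =>
  rcases k with _ | k
  · simp [he₀]
  intro hk
  push_cast at hk
  set f := deviationBound α b R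
  have hkR : α * k ≤ R := by linarith
  have hβf : ∀ j ≤ k, β j ≤ f j + b := fun j hj => by
    have hjR : α * j ≤ R := hkR.trans' (by gcongr)
    linarith [hβ j, ih j (by omega) hjR]
  have hsum : ∑ j ∈ range k, β (j + 1) * β j ≤ 3 * R * b / α * f k := by
    rw [← sum_range_deviationBound_add_mul hα (by linarith)]
    refine sum_le_sum fun j hj => ?_
    have hjk : j < k := mem_range.mp hj
    exact mul_le_mul (hβf _ hjk) (hβf _ hjk.le) (hβ₀ _) ((hβ₀ _).trans (hβf _ hjk))
  have hfk : 0 ≤ f k := deviationBound_nonneg hα.le hb (by linarith)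
  have hgk : f k + b ≤ 3 / 2 * b := deviationBound_add_le hb hR hkR
  have hgrowth : α * γ * (3 * R * b / α) * (f k + b) ≤ 1 - L := by
    rw [mul_comm α γ, mul_assoc γ, mul_div_cancel₀ _ hα.ne']
    have : 0 ≤ γ * (3 * R * b) := by positivity
    nlinarith [mul_le_mul_of_nonneg_left hgk this]
  calc e (k + 1) ≤ L * e k + α * γ * (∑ j ∈ range k, β (j + 1) * β j) * β k := hstep k
    _ ≤ L * f k + α * γ * (3 * R * b / α * f k) * (f k + b) := by
        gcongr
        · exact ih k (by omega) hkR
        · exact hβ₀ k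
        · exact hβf k le_rfl
    _ = L * f k + α * γ * (3 * R * b / α) * (f k + b) * f k := by ring
    _ ≤ L * f k + (1 - L) * f k := by gcongr
    _ = f k := by ring
    _ ≤ f (k + 1) := deviationBound_mono hα.le hb hR.le k.le_succ (by push_cast; linarith)

end DeviationBound

lemma evNorm_deviation_succ_le {n t₀ : ℕ} {α : ℝ} (hα : 0 ≤ α) {H : Matrix (Fin n) (Fin n) ℝ}
    {s : ℕ → Fin n → ℝ} {A A' : ℕ → Matrix (Fin n) (Fin n) ℝ} {b b' : ℕ → Fin n → ℝ}
    (hbrec : ∀ t, t₀ ≤ t → b (t + 1) = A t *ᵥ b t - s t)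
    (hArec : ∀ t, t₀ ≤ t →
      A (t + 1) = A t - α • (H * vecMulVec (b (t + 1)) (b t) * H ^ 2))
    (hA'0 : A' t₀ = A t₀) (hb'rec : ∀ t, t₀ ≤ t → b' (t + 1) = A' t₀ *ᵥ b' t - s t) (k : ℕ) :
    evNorm (b (t₀ + k + 1) - b' (t₀ + k + 1)) ≤
      ‖A' t₀‖ * evNorm (b (t₀ + k) - b' (t₀ + k)) +
        α * ‖H‖ ^ 3 * (∑ j ∈ range k, evNorm (b (t₀ + j + 1)) * evNorm (b (t₀ + j))) *
          evNorm (b (t₀ + k)) := by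
  have ht : t₀ ≤ t₀ + k := Nat.le_add_right t₀ k
  rw [hbrec _ ht, hb'rec _ ht]
  grw [evNorm_mulVec_sub_mulVec_le, hA'0, norm_sub_le_sum_of_rankOne_update hArec k,
    abs_of_nonneg hα]
  exact evNorm_nonneg _

theorem lodo_deviation_nonlinear_bound_general
    (n : ℕ) (t₀ : ℕ) (α : ℝ) (hα : 0 < α)
    (H : Matrix (Fin n) (Fin n) ℝ) (s : ℕ → (Fin n → ℝ))
    (bmax : ℝ)
    (A A' : ℕ → Matrix (Fin n) (Fin n) ℝ) (b b' : ℕ → (Fin n → ℝ))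
    (hb0 : b t₀ = 0)
    (hbrec : ∀ t, t₀ ≤ t → b (t + 1) = A t *ᵥ b t - s t)
    (hArec : ∀ t, t₀ ≤ t →
      A (t + 1) = A t - α • (H * vecMulVec (b (t + 1)) (b t) * H ^ 2))
    (hA'0 : A' t₀ = A t₀) (hb'0 : b' t₀ = 0)
    (hb'rec : ∀ t, t₀ ≤ t → b' (t + 1) = A' t₀ *ᵥ b' t - s t)
    (hb'bound : ∀ t, t₀ ≤ t → evNorm (b' t) ≤ bmax) :
    ∀ R : ℝ, 0 < R →
      R ≤ 4 / 27 * (1 - specNorm (A' t₀)) / (specNorm H ^ 3 * bmax ^ 2) - α →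
      ∀ Δt : ℕ, (Δt : ℝ) ≤ R / α →
        epsB t₀ b b' Δt ≤ α * bmax * Δt / (3 * R - α * Δt) := by
  intro R hR hRle Δt hΔt
  rw [specNorm_eq_norm, specNorm_eq_norm] at hRle
  have hbmax : 0 ≤ bmax := (evNorm_nonneg _).trans (hb'bound t₀ le_rfl)
  have hsmall : 9 * ‖H‖ ^ 3 * bmax ^ 2 * R ≤ 2 * (1 - ‖A' t₀‖) := by
    have hd : 0 ≤ ‖H‖ ^ 3 * bmax ^ 2 := by positivity
    have := mul_le_of_pos_le_div (by linarith) hd (le_sub_iff_add_le.mp hRle)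
    nlinarith [mul_nonneg hα.le hd, mul_nonneg hR.le hd]
  have hdev : ∀ k : ℕ, α * k ≤ R →
      evNorm (b (t₀ + k) - b' (t₀ + k)) ≤ deviationBound α bmax R k :=
    le_deviationBound_of_recurrence hα hbmax hR (norm_nonneg _) (by positivity) hsmall
      (by simp [hb0, hb'0, evNorm]) (fun _ => evNorm_nonneg _)
      (fun k => (evNorm_le_evNorm_sub_add _ _).trans
        (add_le_add_right (hb'bound _ (Nat.le_add_right _ _)) _))
      (evNorm_deviation_succ_le hα.le hbrec hArec hA'0 hb'rec)
  have hΔtR : α * Δt ≤ R := by rwa [le_div_iff₀ hα, mul_comm] at hΔt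
  refine sup'_le _ _ fun τ hτ => ?_
  obtain ⟨j, rfl⟩ : ∃ j, τ = t₀ + j := ⟨τ - t₀, by grind⟩
  have hjΔt : j ≤ Δt := by grind
  exact (hdev j (hΔtR.trans' (by gcongr))).trans
    (deviationBound_mono hα.le hbmax hR.le hjΔt (by linarith))

/-- Nonlinear-in-time deviation bound over a trajectory of length
`R/α`. -/
theorem lodo_deviation_nonlinear_bound
    (n : ℕ) (hn : 1 ≤ n) (t₀ : ℕ) (α : ℝ) (hα : 0 < α)
    (H : Matrix (Fin n) (Fin n) ℝ) (s : ℕ → (Fin n → ℝ))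
    (bmax : ℝ) (hbmax : 0 < bmax)
    (A A' : ℕ → Matrix (Fin n) (Fin n) ℝ) (b b' : ℕ → (Fin n → ℝ))
    (hb0 : b t₀ = 0)
    (hbrec : ∀ t, t₀ ≤ t → b (t + 1) = A t *ᵥ b t - s t)
    (hArec : ∀ t, t₀ ≤ t →
      A (t + 1) = A t - α • (H * vecMulVec (b (t + 1)) (b t) * H ^ 2))
    (hA'0 : A' t₀ = A t₀) (hb'0 : b' t₀ = 0)
    (hb'rec : ∀ t, t₀ ≤ t → b' (t + 1) = A' t₀ *ᵥ b' t - s t)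
    (hA'rec : ∀ t, t₀ ≤ t →
      A' (t + 1) = A' t - α • (H * vecMulVec (b' (t + 1)) (b' t) * H ^ 2))
    (hAnorm : specNorm (A' t₀) < 1)
    (hb'bound : ∀ t, t₀ ≤ t → evNorm (b' t) ≤ bmax) :
    ∀ R : ℝ, 0 < R →
      R ≤ 4 / 27 * (1 - specNorm (A' t₀)) / (specNorm H ^ 3 * bmax ^ 2) - α →
      ∀ Δt : ℕ, (Δt : ℝ) ≤ R / α →
        epsB t₀ b b' Δt ≤ α * bmax * Δt / (3 * R - α * Δt) :=
  lodo_deviation_nonlinear_bound_general n t₀ α hα H s bmax A A' b b' hb0 hbrec hArec hA'0 hb'0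
    hb'rec hb'bound
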